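/- arXiv:1009.3341 — 3 statements merged into one kernel-verified Lean document; each statement's English description precedes it below -/
import Mathlib

section
/- Let n ≥ 2 and work in the field ℚ(x_1,…,x_n). For 1 ≤ i ≤ n define L_i = (1/(x_i x_{i+1} ⋯ x_n)) · [1,1] · diag(1, x_{i-1}) · (∏_{j=i}^{n-1} [[x_{j+1},0],[1,x_j]]) · [1;1]ᵗ, with the convention x_0 = 1, and set L_{n+1} = 1. Then for every 1 ≤ i ≤ n one has x_i · L_i − x_{i-1} · L_{i+1} = 1. -/
/-!
Write `B = Aᵢ ⋯ A_{n-1}` for the product of transfer matrices and `v = B [1;1]`. Every transfer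
matrix has first row `(x_{j+1}, 0)`, so `v₀ = x_{i+1} ⋯ xₙ`, while the matrix formula reads
`Lᵢ = (v₀ + x_{i-1} v₁) / (xᵢ v₀)`, i.e. `xᵢ Lᵢ = 1 + x_{i-1} (v₁ / v₀)`. Peeling `Aᵢ` off `B`
shows that the same ratio `v₁ / v₀` is `L_{i+1}` (for `i = n` it is `1 = L_{n+1}`).
-/

open Matrix Finset

section Transfer

variable {R : Type*} [CommSemiring R] (x : ℕ → R)

def transferMatrix (j : ℕ) : Matrix (Fin 2) (Fin 2) R := !![x (j + 1), 0; 1, x j]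

def transferProd (i k : ℕ) : Matrix (Fin 2) (Fin 2) R :=
  ((List.range' i k).map (transferMatrix x)).prod

lemma transferProd_zero (i : ℕ) : transferProd x i 0 = 1 := rfl

lemma transferProd_succ (i k : ℕ) :
    transferProd x i (k + 1) = transferMatrix x i * transferProd x (i + 1) k := by
  simp [transferProd, List.range'_succ]

lemma transferMatrix_mulVec_zero (j : ℕ) (u : Fin 2 → R) :
    (transferMatrix x j *ᵥ u) 0 = x (j + 1) * u 0 := by
  simp [transferMatrix, mulVec, dotProduct, Fin.sum_univ_two]

lemma transferMatrix_mulVec_one (j : ℕ) (u : Fin 2 → R) :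
    (transferMatrix x j *ᵥ u) 1 = u 0 + x j * u 1 := by
  simp [transferMatrix, mulVec, dotProduct, Fin.sum_univ_two]

lemma transferProd_mulVec_zero (u : Fin 2 → R) (k : ℕ) :
    ∀ i, (transferProd x i k *ᵥ u) 0 = (∏ j ∈ Ioc i (i + k), x j) * u 0 := by
  induction k with
  | zero => simp [transferProd_zero]
  | succ k ih =>
    intro i
    rw [transferProd_succ, ← mulVec_mulVec, transferMatrix_mulVec_zero, ih, ← mul_assoc,
      mul_prod_Ioc_eq_prod_Icc (by omega), Icc_add_one_left_eq_Ioc,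
      show i + 1 + k = i + (k + 1) by omega]

variable (n : ℕ)

def transferVec (i : ℕ) : Fin 2 → R := transferProd x i (n - i) *ᵥ ![1, 1]

lemma transferVec_zero {i : ℕ} (hi : i ≤ n) : transferVec x n i 0 = ∏ j ∈ Ioc i n, x j := by
  rw [transferVec, transferProd_mulVec_zero, Nat.add_sub_cancel' hi]
  simp

lemma transferVec_of_lt {i : ℕ} (hi : i < n) :
    transferVec x n i = transferMatrix x i *ᵥ transferVec x n (i + 1) := by
  rw [transferVec, transferVec, show n - i = n - (i + 1) + 1 by omega, transferProd_succ,
    mulVec_mulVec]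

lemma transferVec_self : transferVec x n n = ![1, 1] := by
  simp [transferVec, transferProd_zero]

lemma bilinear_entry_eq (c : R) (B : Matrix (Fin 2) (Fin 2) R) :
    (!![(1 : R), 1] * !![1, 0; 0, c] * B * !![(1 : R); 1]) 0 0 =
      (B *ᵥ ![1, 1]) 0 + c * (B *ᵥ ![1, 1]) 1 := by
  simp [mul_apply, mulVec, vecMul, dotProduct, Fin.sum_univ_two, mul_add, add_assoc, add_left_comm]

end Transfer

section Field

variable {K : Type*} [Field K] (x : ℕ → K) (n : ℕ)

def projectiveL (i : ℕ) : K :=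
  (∏ j ∈ Icc i n, x j)⁻¹ *
    ((!![(1 : K), 1] * !![1, 0; 0, x (i - 1)] * transferProd x i (n - i) * !![(1 : K); 1]) 0 0)

lemma mul_projectiveL {i : ℕ} (hi : i ≤ n) (hx : ∀ j ∈ Icc i n, x j ≠ 0) :
    x i * projectiveL x n i =
      1 + x (i - 1) * (transferVec x n i 1 / transferVec x n i 0) := by
  have hP : ∏ j ∈ Ioc i n, x j ≠ 0 :=
    prod_ne_zero_iff.mpr fun j hj => hx j (Ioc_subset_Icc_self hj)
  have hxi : x i ≠ 0 := hx i (left_mem_Icc.mpr hi)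
  rw [projectiveL, bilinear_entry_eq, ← transferVec, transferVec_zero x n hi,
    ← mul_prod_Ioc_eq_prod_Icc hi]
  field_simp

lemma projectiveL_succ {i : ℕ} (hi : i < n) :
    projectiveL x n (i + 1) = transferVec x n i 1 / transferVec x n i 0 := by
  rw [projectiveL, bilinear_entry_eq, ← transferVec, transferVec_zero x n hi.le,
    transferVec_of_lt x n hi, transferMatrix_mulVec_one, Icc_add_one_left_eq_Ioc,
    Nat.add_sub_cancel, div_eq_inv_mul]

end Field

theorem stmt_7_general (n : ℕ)
    (x : ℕ → FractionRing (MvPolynomial ℕ ℚ))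
    (hx : ∀ i, 1 ≤ i →
      x i = algebraMap (MvPolynomial ℕ ℚ) (FractionRing (MvPolynomial ℕ ℚ)) (MvPolynomial.X i))
    (L : ℕ → FractionRing (MvPolynomial ℕ ℚ))
    (hL : ∀ i, 1 ≤ i → i ≤ n →
      L i = (∏ j ∈ Finset.Icc i n, x j)⁻¹ *
        ((!![(1 : FractionRing (MvPolynomial ℕ ℚ)), 1] * !![1, 0; 0, x (i - 1)] *
            ((List.range' i (n - i)).map fun j => !![x (j + 1), 0; 1, x j]).prod *
            !![(1 : FractionRing (MvPolynomial ℕ ℚ)); 1]) 0 0))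
    (hL' : L (n + 1) = 1) :
    ∀ i, 1 ≤ i → i ≤ n → x i * L i - x (i - 1) * L (i + 1) = 1 := by
  have hL : ∀ i, 1 ≤ i → i ≤ n → L i = projectiveL x n i := hL
  intro i hi hin
  have hx_ne : ∀ j ∈ Icc i n, x j ≠ 0 := fun j hj => by
    rw [hx j (hi.trans (mem_Icc.mp hj).1), map_ne_zero_iff _ (IsFractionRing.injective _ _)]
    exact MvPolynomial.X_ne_zero j
  rw [hL i hi hin, mul_projectiveL x n hin hx_ne]
  rcases hin.lt_or_eq with hlt | rfl
  · rw [hL (i + 1) (by omega) hlt, projectiveL_succ x n hlt]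
    ring
  · simp [hL', transferVec_self]

/-- The coefficient-free projective exchange relation `xᵢ Lᵢ − x_{i-1} L_{i+1} = 1`
for the linearly oriented type `Aₙ` quiver, with the convention `x₀ = 1` and
`L_{n+1} = 1`. -/
theorem stmt_7 (n : ℕ) (hn : 2 ≤ n)
    (x : ℕ → FractionRing (MvPolynomial ℕ ℚ))
    (hx0 : x 0 = 1)
    (hx : ∀ i, 1 ≤ i →
      x i = algebraMap (MvPolynomial ℕ ℚ) (FractionRing (MvPolynomial ℕ ℚ)) (MvPolynomial.X i))
    (L : ℕ → FractionRing (MvPolynomial ℕ ℚ))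
    (hL : ∀ i, 1 ≤ i → i ≤ n →
      L i = (∏ j ∈ Finset.Icc i n, x j)⁻¹ *
        ((!![(1 : FractionRing (MvPolynomial ℕ ℚ)), 1] * !![1, 0; 0, x (i - 1)] *
            ((List.range' i (n - i)).map fun j => !![x (j + 1), 0; 1, x j]).prod *
            !![(1 : FractionRing (MvPolynomial ℕ ℚ)); 1]) 0 0))
    (hL' : L (n + 1) = 1) :
    ∀ i, 1 ≤ i → i ≤ n → x i * L i - x (i - 1) * L (i + 1) = 1 :=
  stmt_7_general n x hx L hL hL'
end

section
/- Let n ≥ 2 and work in the field ℚ(x_1,…,x_n). Then ∏_{i=1}^{n-1} [[x_{i+1},0],[1,x_i]] = [[x_2 x_3 ⋯ x_n, 0],[ Σ_{j=1}^{n-1} (x_1 x_2 ⋯ x_n)/(x_j x_{j+1}), x_1 x_2 ⋯ x_{n-1}]]. -/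
/-- The product `∏_{i=1}^{n-1} [[x_{i+1},0],[1,x_i]]` equals
`[[x₂⋯xₙ, 0], [Σ_{j=1}^{n-1} (x₁⋯xₙ)/(xⱼx_{j+1}), x₁⋯x_{n-1}]]`. -/
theorem stmt_8 (n : ℕ) (hn : 2 ≤ n)
    (x : ℕ → FractionRing (MvPolynomial ℕ ℚ))
    (hx : ∀ i,
      x i = algebraMap (MvPolynomial ℕ ℚ) (FractionRing (MvPolynomial ℕ ℚ)) (MvPolynomial.X i)) :
    ((List.range' 1 (n - 1)).map fun i => !![x (i + 1), 0; 1, x i]).prod =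
      !![∏ j ∈ Finset.Icc 2 n, x j, 0;
         ∑ j ∈ Finset.Icc 1 (n - 1), (∏ k ∈ Finset.Icc 1 n, x k) / (x j * x (j + 1)),
         ∏ j ∈ Finset.Icc 1 (n - 1), x j] := by
  have hx0 : ∀ i, x i ≠ 0 := by
    intro i
    rw [hx i]
    simp [MvPolynomial.X_ne_zero]
  clear hx
  obtain ⟨m, rfl⟩ : ∃ m, n = m + 2 := ⟨n - 2, by omega⟩
  clear hn
  induction m with
  | zero =>
    have h1 : (0 + 2 - 1 : ℕ) = 1 := rfl
    have h2 : (0 + 2 : ℕ) = 2 := rfl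
    rw [h1, h2]
    simp only [List.range'_one, List.map_cons, List.map_nil,
      List.prod_cons, List.prod_nil, mul_one]
    have h12 : (Finset.Icc 1 2 : Finset ℕ) = {1, 2} := by decide
    rw [Finset.Icc_self, Finset.Icc_self, h12]
    simp only [Finset.prod_singleton, Finset.sum_singleton]
    rw [show ({1, 2} : Finset ℕ) = insert 1 {2} from rfl,
      Finset.prod_insert (by decide), Finset.prod_singleton,
      show (1 + 1 : ℕ) = 2 from rfl, div_self (mul_ne_zero (hx0 1) (hx0 2))]
  | succ m ih =>
    have hr : List.range' 1 (m + 1 + 2 - 1) = List.range' 1 (m + 2 - 1) ++ [m + 2] := by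
      show List.range' 1 (m + 2) = List.range' 1 (m + 1) ++ [m + 2]
      rw [List.range'_concat, show (1 + 1 * (m + 1) : ℕ) = m + 2 from by omega]
    rw [hr, List.map_append, List.prod_append, ih]
    simp only [List.map_cons, List.map_nil, List.prod_cons, List.prod_nil, mul_one]
    have e1 : (m + 1 + 2 : ℕ) = (m + 2) + 1 := rfl
    have e2 : (m + 1 + 2 - 1 : ℕ) = (m + 1) + 1 := rfl
    rw [e1, e2,
      Finset.prod_Icc_succ_top (show 2 ≤ (m + 2) + 1 by omega),
      Finset.prod_Icc_succ_top (show 1 ≤ (m + 1) + 1 by omega),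
      Finset.sum_Icc_succ_top (show 1 ≤ (m + 1) + 1 by omega)]
    have hP : ∏ k ∈ Finset.Icc 1 (m + 2 + 1), x k
        = (∏ k ∈ Finset.Icc 1 (m + 2), x k) * x (m + 2 + 1) := by
      rw [Finset.prod_Icc_succ_top (show 1 ≤ (m + 2) + 1 by omega)]
    have hQ : ∏ k ∈ Finset.Icc 1 (m + 2), x k
        = (∏ k ∈ Finset.Icc 1 (m + 1), x k) * x (m + 2) := by
      rw [Finset.prod_Icc_succ_top (show 1 ≤ (m + 1) + 1 by omega)]
    ext i j
    fin_cases i <;> fin_cases j <;>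
      simp [Matrix.mul_apply, Fin.sum_univ_succ, Finset.sum_mul]
    rw [hP, hQ]
    congr 1
    · refine Finset.sum_congr rfl fun k hk => ?_
      rw [div_mul_eq_mul_div]
    · rw [show x (m + 1 + 1) = x (m + 2) from rfl,
        show x (m + 1 + 1 + 1) = x (m + 2 + 1) from rfl,
        mul_assoc, mul_div_assoc,
        div_self (mul_ne_zero (hx0 (m + 2)) (hx0 (m + 2 + 1))), mul_one]
end

section
/- Define, for a word w = w_1⋯w_n in the two letters '+' and '−', matrices a(+) = [[1,0],[1,1]] and a(−) = [[1,1],[0,1]], and set l_w = [1,1]·(∏_{i=1}^{n} a(w_i))·[1;1]ᵗ, where by convention l of a length-0 string is 2. Then for any word w, l_w equals the specialization at x_j = 1 (all j) of the Laurent polynomial [1,1]·(∏_{i=1}^n A(c_i))·[1;1]ᵗ for any walk c of sign pattern w, and in particular l_w ≥ n + 2. -/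
private def aMat (b : Bool) : Matrix (Fin 2) (Fin 2) ℤ :=
  if b then !![(1 : ℤ), 0; 1, 1] else !![1, 1; 0, 1]

private lemma aux_ineq (w : List Bool) :
    1 ≤ ((w.map aMat).prod) 0 0 + ((w.map aMat).prod) 0 1 ∧
    1 ≤ ((w.map aMat).prod) 1 0 + ((w.map aMat).prod) 1 1 ∧
    (w.length : ℤ) + 2 ≤
      ((w.map aMat).prod) 0 0 + ((w.map aMat).prod) 0 1 +
      ((w.map aMat).prod) 1 0 + ((w.map aMat).prod) 1 1 := by
  induction w with
  | nil => norm_num [Matrix.one_apply]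
  | cons b tl ih =>
    obtain ⟨h1, h2, h3⟩ := ih
    cases b <;>
      · simp only [List.map_cons, List.prod_cons, Matrix.mul_apply, Fin.sum_univ_two,
          List.length_cons, aMat, if_true, if_false, Bool.false_eq_true]
        norm_num [Matrix.cons_val_zero, Matrix.cons_val_one, Matrix.head_cons]
        refine ⟨by linarith, by linarith, by linarith⟩

/-- For a word `w` in the letters `+` (`true`) and `−` (`false`), the integer
`l_w = [1,1]·(∏ a(wᵢ))·[1;1]ᵗ` (with `a(+) = [[1,0],[1,1]]`, `a(−) = [[1,1],[0,1]]`)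
equals the specialisation at all `x_j = 1` of `[1,1]·(∏ A(cᵢ))·[1;1]ᵗ` for any walk
`c` of sign pattern `w`, and `l_w ≥ n + 2` where `n` is the length of `w`. -/
theorem stmt_15 (w : List Bool) (V E : Type) (s t : E → V) (c : ℕ → E × Bool)
    (hsign : ∀ i, i < w.length → (c i).2 = w.getD i true)
    (hwalk : ∀ i, i + 1 < w.length →
      (if (c i).2 then t (c i).1 else s (c i).1) =
        (if (c (i + 1)).2 then s (c (i + 1)).1 else t (c (i + 1)).1)) :
    ((!![(1 : ℤ), 1] *
          (w.map fun b => if b then !![(1 : ℤ), 0; 1, 1] else !![1, 1; 0, 1]).prod *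
          !![(1 : ℤ); 1]) 0 0) =
        MvPolynomial.eval (fun _ : V => (1 : ℤ))
          ((!![(1 : MvPolynomial V ℤ), 1] *
              ((List.range w.length).map fun i =>
                  (if (c i).2 then
                    !![MvPolynomial.X (t (c i).1), 0; 1, MvPolynomial.X (s (c i).1)]
                  else
                    !![MvPolynomial.X (t (c i).1), 1; 0, MvPolynomial.X (s (c i).1)] :
                    Matrix (Fin 2) (Fin 2) (MvPolynomial V ℤ))).prod *
              !![(1 : MvPolynomial V ℤ); 1]) 0 0) ∧
      (w.length : ℤ) + 2 ≤
        ((!![(1 : ℤ), 1] *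
            (w.map fun b => if b then !![(1 : ℤ), 0; 1, 1] else !![1, 1; 0, 1]).prod *
            !![(1 : ℤ); 1]) 0 0) := by
  have hmapeq : (w.map fun b => if b then !![(1 : ℤ), 0; 1, 1] else !![1, 1; 0, 1])
      = w.map aMat := by
    simp [aMat]
  set φ : MvPolynomial V ℤ →+* ℤ := MvPolynomial.eval (fun _ : V => (1 : ℤ)) with hφ
  set L : List (Matrix (Fin 2) (Fin 2) (MvPolynomial V ℤ)) :=
    (List.range w.length).map fun i =>
      (if (c i).2 then
        !![MvPolynomial.X (t (c i).1), 0; 1, MvPolynomial.X (s (c i).1)]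
      else
        !![MvPolynomial.X (t (c i).1), 1; 0, MvPolynomial.X (s (c i).1)]) with hL
  have hlist : L.map φ.mapMatrix = w.map aMat := by
    apply List.ext_getElem
    · simp [hL]
    · intro i h1 h2
      have hi : i < w.length := by simpa [hL] using h1
      have hs := hsign i hi
      have hd : w.getD i true = w[i] := List.getD_eq_getElem w true hi
      rw [hd] at hs
      simp only [hL, List.getElem_map, List.getElem_range]
      rw [hs]
      cases hwi : w[i] <;>
        · ext a b
          fin_cases a <;> fin_cases b <;>
            simp [aMat, RingHom.mapMatrix_apply, Matrix.map_apply, hφ]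
  have hprod : φ.mapMatrix L.prod = (w.map aMat).prod := by
    rw [← hlist, map_list_prod]
  have hent : ∀ a b, φ (L.prod a b) = (w.map aMat).prod a b := by
    intro a b
    have := congrFun (congrFun (congrArg (fun M : Matrix (Fin 2) (Fin 2) ℤ => M) hprod) a) b
    simpa [RingHom.mapMatrix_apply, Matrix.map_apply] using this
  obtain ⟨h1, h2, h3⟩ := aux_ineq w
  rw [hmapeq]
  constructor
  · have lhs_eq : (!![(1 : ℤ), 1] * (w.map aMat).prod * !![(1 : ℤ); 1]) 0 0
        = (w.map aMat).prod 0 0 + (w.map aMat).prod 0 1 +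
          ((w.map aMat).prod 1 0 + (w.map aMat).prod 1 1) := by
      simp [Matrix.mul_apply, Matrix.vecMul, dotProduct, Fin.sum_univ_two]
      ring
    have rhs_eq : (!![(1 : MvPolynomial V ℤ), 1] * L.prod * !![(1 : MvPolynomial V ℤ); 1]) 0 0
        = L.prod 0 0 + L.prod 0 1 + (L.prod 1 0 + L.prod 1 1) := by
      simp [Matrix.mul_apply, Matrix.vecMul, dotProduct, Fin.sum_univ_two]
      ring
    rw [lhs_eq, rhs_eq]
    simp only [map_add]
    rw [show (MvPolynomial.eval fun _ : V => (1:ℤ)) = ⇑φ from rfl]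
    rw [hent 0 0, hent 0 1, hent 1 0, hent 1 1]
  · have lhs_eq : (!![(1 : ℤ), 1] * (w.map aMat).prod * !![(1 : ℤ); 1]) 0 0
        = (w.map aMat).prod 0 0 + (w.map aMat).prod 0 1 +
          ((w.map aMat).prod 1 0 + (w.map aMat).prod 1 1) := by
      simp [Matrix.mul_apply, Matrix.vecMul, dotProduct, Fin.sum_univ_two]
      ring
    rw [lhs_eq]
    linarith
end
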